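/- arXiv:2401.13577 — 3 statements merged into one kernel-verified Lean document; each statement's English description precedes it below -/
import Mathlib

section
/- Let K be a field and let f = a0*x^4 + a1*x^3*y + a2*x^3*z + a3*x^2*y^2 + a4*x^2*y*z + a5*x^2*z^2 + a6*x*y^3 + a7*x*y^2*z + a8*x*y*z^2 + a9*x*z^3 + a10*y^4 + a11*y^3*z + a12*y^2*z^2 + a13*y*z^3 + a14*z^4 ∈ K[x,y,z] with a10 = 0, a6 = 0 and a11 ≠ 0. Then there exists a unique formal power series g ∈ K⟦X⟧ with constant coefficient 0 such that f(X, 1, g) = 0 in K⟦X⟧ (i.e., substituting x ↦ X, y ↦ 1, z ↦ g into f yields the zero power series). Moreover the coefficient of X in g is 0 and the coefficient of X^2 in g is −a3/a11. -/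
/-!
In the chart `y = 1`, `f(X, 1, z)` is a polynomial `P` in `z` over `K⟦X⟧`. Because
`a10 = a6 = 0` its constant term `P(0)` is divisible by `X²`, and its linear coefficient has
constant term `a11`, a unit, so `0` is a simple root of `P` modulo `X`. Newton's iteration
started at `0` then doubles the `X`-adic order of `P(g)` at every step and converges
coefficientwise to a root; a simple root is unique. Finally, writing `P(g) = P(0) + g·u` with
`u ≡ a11 (mod X)` shows that `g` vanishes to the same order as `P(0)`, and comparing the
coefficients of `X²` gives `a3 + a11·g₂ = 0`.
-/

namespace PowerSeries

variable {R : Type*} [CommRing R]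

theorem constantCoeff_eq_of_X_dvd_sub {a b : R⟦X⟧} (h : X ∣ a - b) :
    constantCoeff a = constantCoeff b := by
  rwa [X_dvd_iff, map_sub, sub_eq_zero] at h

theorem coeff_mul_eq_coeff_mul_constantCoeff {g : R⟦X⟧} {k : ℕ} (hg : X ^ k ∣ g)
    (u : R⟦X⟧) :
    coeff k (g * u) = coeff k g * constantCoeff u := by
  obtain ⟨h, rfl⟩ := hg
  simp only [mul_assoc, coeff_X_pow_mul', le_refl, if_true, Nat.sub_self,
    coeff_zero_eq_constantCoeff_apply, map_mul]

theorem eq_zero_of_forall_X_pow_dvd {φ : R⟦X⟧} (h : ∀ n, X ^ (n + 1) ∣ φ) : φ = 0 := by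
  ext n
  exact X_pow_dvd_iff.mp (h n) n n.lt_succ_self

theorem exists_X_pow_dvd_sub_of_X_pow_dvd_succ_sub {s : ℕ → R⟦X⟧}
    (hs : ∀ n, X ^ (n + 1) ∣ s (n + 1) - s n) : ∃ g, ∀ n, X ^ (n + 1) ∣ g - s n := by
  have stable : ∀ m n, m ≤ n → coeff m (s n) = coeff m (s m) := by
    intro m n hmn
    induction n, hmn using Nat.le_induction with
    | base => rfl
    | succ n hmn ih =>
      rw [← ih, ← sub_eq_zero, ← map_sub]
      exact X_pow_dvd_iff.mp (hs n) m (by omega)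
  refine ⟨mk fun m => coeff m (s m), fun n => X_pow_dvd_iff.mpr fun m hm => ?_⟩
  rw [map_sub, coeff_mk, stable m n (by omega), sub_self]

variable (P : Polynomial R⟦X⟧)

theorem exists_eval_eq_coeff_zero_add_mul {g : R⟦X⟧} (hg : X ∣ g) :
    ∃ u, constantCoeff u = constantCoeff (P.coeff 1) ∧ P.eval g = P.coeff 0 + g * u := by
  obtain ⟨c, hc⟩ := Polynomial.exists_mul_sq_add_linear_part_eq_eval_add P 0 g
  rw [zero_add] at hc
  refine ⟨P.coeff 1 + c * g, ?_, ?_⟩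
  · rw [map_add, map_mul, X_dvd_iff.mp hg, mul_zero, add_zero]
  · rw [← hc, ← Polynomial.coeff_zero_eq_eval_zero, ← Polynomial.coeff_zero_eq_eval_zero,
      Polynomial.coeff_derivative]
    ring

theorem isUnit_derivative_eval_of_X_dvd {c : R⟦X⟧} (hc : X ∣ c)
    (hP : IsUnit (constantCoeff (P.coeff 1))) :
    IsUnit (P.derivative.eval c) := by
  have h := Polynomial.sub_dvd_eval_sub c 0 P.derivative
  rw [sub_zero] at h
  rw [isUnit_iff_constantCoeff, constantCoeff_eq_of_X_dvd_sub (hc.trans h),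
    ← Polynomial.coeff_zero_eq_eval_zero, Polynomial.coeff_derivative]
  simpa using hP

noncomputable def newtonStep (c : R⟦X⟧) : R⟦X⟧ :=
  c - P.eval c * Ring.inverse (P.derivative.eval c)

noncomputable def newtonSeq : ℕ → R⟦X⟧
  | 0 => 0
  | n + 1 => newtonStep P (newtonSeq n)

theorem X_pow_dvd_newtonStep_sub {c : R⟦X⟧} {k : ℕ} (h : X ^ k ∣ P.eval c) :
    X ^ k ∣ newtonStep P c - c := by
  rw [newtonStep, sub_sub_cancel_left, dvd_neg]
  exact h.mul_right _

theorem X_pow_dvd_eval_newtonStep {c : R⟦X⟧} {k : ℕ} (hc : X ∣ c)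
    (hP : IsUnit (constantCoeff (P.coeff 1))) (h : X ^ k ∣ P.eval c) :
    X ^ (2 * k) ∣ P.eval (newtonStep P c) := by
  obtain ⟨m, hm⟩ :=
    Polynomial.exists_mul_sq_add_linear_part_eq_eval_add P c (newtonStep P c - c)
  have linear_cancel : P.derivative.eval c * (newtonStep P c - c) = -P.eval c := by
    rw [newtonStep, sub_sub_cancel_left, mul_neg, mul_left_comm,
      Ring.mul_inverse_cancel _ (isUnit_derivative_eval_of_X_dvd P hc hP), mul_one]
  rw [add_sub_cancel, linear_cancel, neg_add_cancel_right] at hm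
  rw [← hm, mul_comm 2, pow_mul]
  exact (pow_dvd_pow_of_dvd (X_pow_dvd_newtonStep_sub P h) 2).mul_left m

theorem X_pow_dvd_eval_newtonSeq (hP0 : X ∣ P.coeff 0) (hP : IsUnit (constantCoeff (P.coeff 1)))
    (n : ℕ) : X ∣ newtonSeq P n ∧ X ^ (n + 1) ∣ P.eval (newtonSeq P n) := by
  induction n with
  | zero => simpa [newtonSeq, ← Polynomial.coeff_zero_eq_eval_zero] using hP0
  | succ n ih =>
    refine ⟨?_, ?_⟩
    · have h := (dvd_pow_self X n.succ_ne_zero).trans (X_pow_dvd_newtonStep_sub P ih.2)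
      simpa [newtonSeq] using dvd_add h ih.1
    · exact (pow_dvd_pow X (by omega)).trans (X_pow_dvd_eval_newtonStep P ih.1 hP ih.2)

theorem exists_eval_eq_zero (hP0 : X ∣ P.coeff 0) (hP : IsUnit (constantCoeff (P.coeff 1))) :
    ∃ g, X ∣ g ∧ P.eval g = 0 := by
  obtain ⟨g, hg⟩ := exists_X_pow_dvd_sub_of_X_pow_dvd_succ_sub (s := newtonSeq P)
    fun n => X_pow_dvd_newtonStep_sub P (X_pow_dvd_eval_newtonSeq P hP0 hP n).2
  refine ⟨g, by simpa [newtonSeq] using hg 0, eq_zero_of_forall_X_pow_dvd fun n => ?_⟩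
  simpa using dvd_add ((hg n).trans (Polynomial.sub_dvd_eval_sub _ _ P))
    (X_pow_dvd_eval_newtonSeq P hP0 hP n).2

theorem eq_of_eval_eq_zero_of_X_dvd [IsLocalRing R] (hP : IsUnit (constantCoeff (P.coeff 1)))
    {a b : R⟦X⟧} (ha : X ∣ a) (hb : X ∣ b) (ha0 : P.eval a = 0) (hb0 : P.eval b = 0) :
    a = b := by
  refine IsLocalRing.eq_of_eval_eq_zero_of_not_isUnit_sub ha0 hb0 ?_
    (isUnit_derivative_eval_of_X_dvd P ha hP)
  rw [isUnit_iff_constantCoeff, X_dvd_iff.mp (dvd_sub ha hb)]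
  exact not_isUnit_zero

variable {P} {g : R⟦X⟧} (hg : X ∣ g) (hg0 : P.eval g = 0)
include hg hg0

theorem X_pow_dvd_of_eval_eq_zero (hP : IsUnit (constantCoeff (P.coeff 1))) {k : ℕ}
    (hk : X ^ k ∣ P.coeff 0) : X ^ k ∣ g := by
  obtain ⟨u, hu, hPg⟩ := exists_eval_eq_coeff_zero_add_mul P hg
  have hunit : IsUnit u := isUnit_iff_constantCoeff.mpr (hu ▸ hP)
  rw [hg0, eq_comm, add_eq_zero_iff_eq_neg'] at hPg
  rw [← hunit.dvd_mul_right, hPg, dvd_neg]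
  exact hk

theorem coeff_coeff_zero_add_constantCoeff_mul_coeff_eq_zero {k : ℕ} (hk : X ^ k ∣ g) :
    coeff k (P.coeff 0) + constantCoeff (P.coeff 1) * coeff k g = 0 := by
  obtain ⟨u, hu, hPg⟩ := exists_eval_eq_coeff_zero_add_mul P hg
  rw [← hu, mul_comm, ← coeff_mul_eq_coeff_mul_constantCoeff hk, ← map_add, ← hPg, hg0,
    map_zero]

end PowerSeries

open PowerSeries

theorem exists_polynomial_eval_eq_aeval_quartic {K : Type*} [Field K]
    {a0 a1 a2 a3 a4 a5 a6 a7 a8 a9 a10 a11 a12 a13 a14 : K}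
    {f : MvPolynomial (Fin 3) K}
    (hf : f = MvPolynomial.C a0 * MvPolynomial.X 0 ^ 4 +
      MvPolynomial.C a1 * MvPolynomial.X 0 ^ 3 * MvPolynomial.X 1 +
      MvPolynomial.C a2 * MvPolynomial.X 0 ^ 3 * MvPolynomial.X 2 +
      MvPolynomial.C a3 * MvPolynomial.X 0 ^ 2 * MvPolynomial.X 1 ^ 2 +
      MvPolynomial.C a4 * MvPolynomial.X 0 ^ 2 * MvPolynomial.X 1 * MvPolynomial.X 2 +
      MvPolynomial.C a5 * MvPolynomial.X 0 ^ 2 * MvPolynomial.X 2 ^ 2 +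
      MvPolynomial.C a6 * MvPolynomial.X 0 * MvPolynomial.X 1 ^ 3 +
      MvPolynomial.C a7 * MvPolynomial.X 0 * MvPolynomial.X 1 ^ 2 * MvPolynomial.X 2 +
      MvPolynomial.C a8 * MvPolynomial.X 0 * MvPolynomial.X 1 * MvPolynomial.X 2 ^ 2 +
      MvPolynomial.C a9 * MvPolynomial.X 0 * MvPolynomial.X 2 ^ 3 +
      MvPolynomial.C a10 * MvPolynomial.X 1 ^ 4 +
      MvPolynomial.C a11 * MvPolynomial.X 1 ^ 3 * MvPolynomial.X 2 +
      MvPolynomial.C a12 * MvPolynomial.X 1 ^ 2 * MvPolynomial.X 2 ^ 2 +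
      MvPolynomial.C a13 * MvPolynomial.X 1 * MvPolynomial.X 2 ^ 3 +
      MvPolynomial.C a14 * MvPolynomial.X 2 ^ 4)
    (h10 : a10 = 0) (h6 : a6 = 0) :
    ∃ P : Polynomial K⟦X⟧, (∀ g, MvPolynomial.aeval ![X, 1, g] f = P.eval g) ∧
      X ^ 2 ∣ P.coeff 0 ∧ coeff 2 (P.coeff 0) = a3 ∧ constantCoeff (P.coeff 1) = a11 := by
  let B0 : K⟦X⟧ := X ^ 2 * (C a3 + C a1 * X + C a0 * X ^ 2)
  let B1 : K⟦X⟧ := C a11 + C a7 * X + C a4 * X ^ 2 + C a2 * X ^ 3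
  let P : Polynomial K⟦X⟧ := Polynomial.C B0 + Polynomial.C B1 * Polynomial.X +
    Polynomial.C (C a12 + C a8 * X + C a5 * X ^ 2) * Polynomial.X ^ 2 +
    Polynomial.C (C a13 + C a9 * X) * Polynomial.X ^ 3 + Polynomial.C (C a14) * Polynomial.X ^ 4
  have hP_coeff : P.coeff 0 = B0 ∧ P.coeff 1 = B1 := by
    simp only [P, Polynomial.coeff_add, Polynomial.coeff_C_mul_X_pow, Polynomial.coeff_C_mul_X,
      Polynomial.coeff_C]
    norm_num
  obtain ⟨hP0, hP1⟩ := hP_coeff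
  refine ⟨P, fun g => ?_, ?_, ?_, ?_⟩
  · subst hf h10 h6
    simp only [map_add, map_mul, map_pow, MvPolynomial.aeval_X, MvPolynomial.aeval_C,
      Matrix.cons_val_zero, Matrix.cons_val_one, Matrix.cons_val_two, Matrix.head_cons,
      Matrix.tail_cons, ← C_eq_algebraMap, map_zero, Polynomial.eval_add, Polynomial.eval_mul,
      Polynomial.eval_pow, Polynomial.eval_C, Polynomial.eval_X, P, B0, B1]
    ring
  · exact hP0 ▸ dvd_mul_right _ _
  · simp [hP0, B0, coeff_X_pow_mul']
  · simp [hP1, B1]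

/-- Let `f` be the general homogeneous quartic over a field `K` with
`a10 = 0`, `a6 = 0` and `a11 ≠ 0` (so `(0:1:0)` is a smooth point of `f = 0` with
tangent line `z = 0`). Then there is a unique formal power series `g ∈ K⟦X⟧` with
constant coefficient `0` such that `f(X, 1, g) = 0` in `K⟦X⟧`; moreover the
coefficient of `X` in `g` is `0` and the coefficient of `X^2` in `g` is `-a3/a11`. -/
theorem statement1 (K : Type*) [Field K]
    (a0 a1 a2 a3 a4 a5 a6 a7 a8 a9 a10 a11 a12 a13 a14 : K)
    (f : MvPolynomial (Fin 3) K)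
    (hf : f = MvPolynomial.C a0 * MvPolynomial.X 0 ^ 4 +
      MvPolynomial.C a1 * MvPolynomial.X 0 ^ 3 * MvPolynomial.X 1 +
      MvPolynomial.C a2 * MvPolynomial.X 0 ^ 3 * MvPolynomial.X 2 +
      MvPolynomial.C a3 * MvPolynomial.X 0 ^ 2 * MvPolynomial.X 1 ^ 2 +
      MvPolynomial.C a4 * MvPolynomial.X 0 ^ 2 * MvPolynomial.X 1 * MvPolynomial.X 2 +
      MvPolynomial.C a5 * MvPolynomial.X 0 ^ 2 * MvPolynomial.X 2 ^ 2 +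
      MvPolynomial.C a6 * MvPolynomial.X 0 * MvPolynomial.X 1 ^ 3 +
      MvPolynomial.C a7 * MvPolynomial.X 0 * MvPolynomial.X 1 ^ 2 * MvPolynomial.X 2 +
      MvPolynomial.C a8 * MvPolynomial.X 0 * MvPolynomial.X 1 * MvPolynomial.X 2 ^ 2 +
      MvPolynomial.C a9 * MvPolynomial.X 0 * MvPolynomial.X 2 ^ 3 +
      MvPolynomial.C a10 * MvPolynomial.X 1 ^ 4 +
      MvPolynomial.C a11 * MvPolynomial.X 1 ^ 3 * MvPolynomial.X 2 +
      MvPolynomial.C a12 * MvPolynomial.X 1 ^ 2 * MvPolynomial.X 2 ^ 2 +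
      MvPolynomial.C a13 * MvPolynomial.X 1 * MvPolynomial.X 2 ^ 3 +
      MvPolynomial.C a14 * MvPolynomial.X 2 ^ 4)
    (h10 : a10 = 0) (h6 : a6 = 0) (h11 : a11 ≠ 0) :
    (∃! g : PowerSeries K,
      PowerSeries.coeff 0 g = 0 ∧
      MvPolynomial.aeval ![PowerSeries.X, 1, g] f = 0) ∧
    (∀ g : PowerSeries K,
      PowerSeries.coeff 0 g = 0 →
      MvPolynomial.aeval ![PowerSeries.X, 1, g] f = 0 →
      PowerSeries.coeff 1 g = 0 ∧ PowerSeries.coeff 2 g = -(a3 / a11)) := by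
  obtain ⟨P, hPf, hP0, hPa3, hPa11⟩ := exists_polynomial_eval_eq_aeval_quartic hf h10 h6
  have hP1 : IsUnit (constantCoeff (P.coeff 1)) := hPa11 ▸ h11.isUnit
  have hX : ∀ g : K⟦X⟧, coeff 0 g = 0 ↔ X ∣ g := fun g => by
    rw [X_dvd_iff, coeff_zero_eq_constantCoeff_apply]
  simp only [hPf, hX]
  obtain ⟨g, hg, hg0⟩ := exists_eval_eq_zero P ((dvd_pow_self X two_ne_zero).trans hP0) hP1
  refine ⟨⟨g, ⟨hg, hg0⟩, fun g' ⟨hg', hg'0⟩ =>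
    eq_of_eval_eq_zero_of_X_dvd P hP1 hg' hg hg'0 hg0⟩, fun g hg hg0 => ?_⟩
  have hX2 : X ^ 2 ∣ g := X_pow_dvd_of_eval_eq_zero hg hg0 hP1 hP0
  have hcoeff2 := coeff_coeff_zero_add_constantCoeff_mul_coeff_eq_zero hg hg0 hX2
  rw [hPa3, hPa11] at hcoeff2
  refine ⟨X_pow_dvd_iff.mp hX2 1 one_lt_two, ?_⟩
  field_simp
  linear_combination hcoeff2
end

section
/- Let K be a field and let f = a0*x^4 + a1*x^3*y + a2*x^3*z + a3*x^2*y^2 + a4*x^2*y*z + a5*x^2*z^2 + a6*x*y^3 + a7*x*y^2*z + a8*x*y*z^2 + a9*x*z^3 + a10*y^4 + a11*y^3*z + a12*y^2*z^2 + a13*y*z^3 + a14*z^4 ∈ K[x,y,z] with a10 = 0, a6 = 0 and a11 ≠ 0, and let g ∈ K⟦X⟧ be a power series with constant coefficient 0 satisfying f(X, 1, g) = 0. Let c = γ1*x^3 + γ2*z^3 + β*x^2*y + γ3*x^2*z + γ4*x*z^2 + γ5*x*y*z + γ6*y^2*z + γ7*y*z^2 ∈ K[x,y,z] be a homogeneous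 cubic of this shape (so the coefficients of y^3 and x*y^2 are zero). Then the power series c(X, 1, g) ∈ K⟦X⟧ has zero coefficients in degrees 0 and 1, its coefficient in degree 2 equals β − γ6·(a3/a11), and hence c(X,1,g) has order at least 3 (all coefficients in degrees 0, 1, 2 vanish) if and only if β = γ6·a3/a11. -/
/-!
Write `g = g₁ X + g₂ X² + ⋯`. Since `g` has no constant term, the degree-1 coefficient of
`f(X, 1, g) = 0` is `a6 + a11 g₁`, forcing `g₁ = 0`. Then every monomial other than `yⁱ`, `x yⁱ`,
`x² yⁱ`, `yⁱ z` becomes a multiple of `X³` at `(X, 1, g)`, so the degree-2 coefficient is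
`a3 + a11 g₂`, giving `g₂ = -a3/a11`, and `c(X, 1, g) ≡ β X² + γ6 g (mod X³)`.
-/

open MvPolynomial in
noncomputable def quartic {K : Type*} [Field K]
    (a0 a1 a2 a3 a4 a5 a6 a7 a8 a9 a10 a11 a12 a13 a14 : K) : MvPolynomial (Fin 3) K :=
  C a0 * X 0 ^ 4 + C a1 * X 0 ^ 3 * X 1 + C a2 * X 0 ^ 3 * X 2 + C a3 * X 0 ^ 2 * X 1 ^ 2 +
    C a4 * X 0 ^ 2 * X 1 * X 2 + C a5 * X 0 ^ 2 * X 2 ^ 2 + C a6 * X 0 * X 1 ^ 3 +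
    C a7 * X 0 * X 1 ^ 2 * X 2 + C a8 * X 0 * X 1 * X 2 ^ 2 + C a9 * X 0 * X 2 ^ 3 +
    C a10 * X 1 ^ 4 + C a11 * X 1 ^ 3 * X 2 + C a12 * X 1 ^ 2 * X 2 ^ 2 + C a13 * X 1 * X 2 ^ 3 +
    C a14 * X 2 ^ 4

open MvPolynomial in
noncomputable def cubic {K : Type*} [Field K] (β γ1 γ2 γ3 γ4 γ5 γ6 γ7 : K) :
    MvPolynomial (Fin 3) K :=
  C γ1 * X 0 ^ 3 + C γ2 * X 2 ^ 3 + C β * X 0 ^ 2 * X 1 + C γ3 * X 0 ^ 2 * X 2 +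
    C γ4 * X 0 * X 2 ^ 2 + C γ5 * X 0 * X 1 * X 2 + C γ6 * X 1 ^ 2 * X 2 + C γ7 * X 1 * X 2 ^ 2

section

variable {K : Type*} [Field K] {g : PowerSeries K}

open PowerSeries

lemma coeff_one_aeval_quartic (a0 a1 a2 a3 a4 a5 a6 a7 a8 a9 a10 a11 a12 a13 a14 : K)
    (hg0 : constantCoeff g = 0) :
    coeff 1 (MvPolynomial.aeval ![X, 1, g]
      (quartic a0 a1 a2 a3 a4 a5 a6 a7 a8 a9 a10 a11 a12 a13 a14)) = a6 + a11 * coeff 1 g := by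
  simp [quartic, coeff_mul, Finset.Nat.sum_antidiagonal_eq_sum_range_succ_mk,
    Finset.sum_range_succ, coeff_C, hg0, pow_succ]

lemma coeff_two_aeval_quartic (a0 a1 a2 a3 a4 a5 a6 a7 a8 a9 a10 a11 a12 a13 a14 : K)
    (hg0 : constantCoeff g = 0) (hg1 : coeff 1 g = 0) :
    coeff 2 (MvPolynomial.aeval ![X, 1, g]
      (quartic a0 a1 a2 a3 a4 a5 a6 a7 a8 a9 a10 a11 a12 a13 a14)) = a3 + a11 * coeff 2 g := by
  simp [quartic, coeff_mul, Finset.Nat.sum_antidiagonal_eq_sum_range_succ_mk,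
    Finset.sum_range_succ, coeff_X, coeff_C, hg0, hg1, pow_succ]

lemma coeff_zero_aeval_cubic (β γ1 γ2 γ3 γ4 γ5 γ6 γ7 : K) (hg0 : constantCoeff g = 0) :
    coeff 0 (MvPolynomial.aeval ![X, 1, g] (cubic β γ1 γ2 γ3 γ4 γ5 γ6 γ7)) = 0 := by
  simp [cubic, hg0]

lemma coeff_one_aeval_cubic (β γ1 γ2 γ3 γ4 γ5 γ6 γ7 : K) (hg0 : constantCoeff g = 0) :
    coeff 1 (MvPolynomial.aeval ![X, 1, g] (cubic β γ1 γ2 γ3 γ4 γ5 γ6 γ7)) = γ6 * coeff 1 g := by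
  simp [cubic, coeff_mul, Finset.Nat.sum_antidiagonal_eq_sum_range_succ_mk,
    Finset.sum_range_succ, coeff_C, hg0, pow_succ]

lemma coeff_two_aeval_cubic (β γ1 γ2 γ3 γ4 γ5 γ6 γ7 : K) (hg0 : constantCoeff g = 0)
    (hg1 : coeff 1 g = 0) :
    coeff 2 (MvPolynomial.aeval ![X, 1, g] (cubic β γ1 γ2 γ3 γ4 γ5 γ6 γ7)) = β + γ6 * coeff 2 g := by
  simp [cubic, coeff_mul, Finset.Nat.sum_antidiagonal_eq_sum_range_succ_mk,
    Finset.sum_range_succ, coeff_C, hg0, hg1, pow_succ]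

lemma coeff_one_eq_zero_of_aeval_quartic_eq_zero
    {a0 a1 a2 a3 a4 a5 a6 a7 a8 a9 a10 a11 a12 a13 a14 : K} (h6 : a6 = 0) (h11 : a11 ≠ 0)
    (hg0 : constantCoeff g = 0)
    (hg : MvPolynomial.aeval ![X, 1, g]
      (quartic a0 a1 a2 a3 a4 a5 a6 a7 a8 a9 a10 a11 a12 a13 a14) = 0) :
    coeff 1 g = 0 := by
  have h := coeff_one_aeval_quartic a0 a1 a2 a3 a4 a5 a6 a7 a8 a9 a10 a11 a12 a13 a14 hg0
  rw [hg, map_zero, h6, zero_add, eq_comm, mul_eq_zero] at h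
  exact h.resolve_left h11

lemma coeff_two_eq_of_aeval_quartic_eq_zero
    {a0 a1 a2 a3 a4 a5 a6 a7 a8 a9 a10 a11 a12 a13 a14 : K} (h11 : a11 ≠ 0)
    (hg0 : constantCoeff g = 0) (hg1 : coeff 1 g = 0)
    (hg : MvPolynomial.aeval ![X, 1, g]
      (quartic a0 a1 a2 a3 a4 a5 a6 a7 a8 a9 a10 a11 a12 a13 a14) = 0) :
    coeff 2 g = -(a3 / a11) := by
  have h := coeff_two_aeval_quartic a0 a1 a2 a3 a4 a5 a6 a7 a8 a9 a10 a11 a12 a13 a14 hg0 hg1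
  rw [hg, map_zero] at h
  field_simp
  linear_combination -h

end

theorem statement2_general (K : Type*) [Field K]
    (a0 a1 a2 a3 a4 a5 a6 a7 a8 a9 a10 a11 a12 a13 a14 : K)
    (f : MvPolynomial (Fin 3) K)
    (hf : f = MvPolynomial.C a0 * MvPolynomial.X 0 ^ 4 +
      MvPolynomial.C a1 * MvPolynomial.X 0 ^ 3 * MvPolynomial.X 1 +
      MvPolynomial.C a2 * MvPolynomial.X 0 ^ 3 * MvPolynomial.X 2 +
      MvPolynomial.C a3 * MvPolynomial.X 0 ^ 2 * MvPolynomial.X 1 ^ 2 +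
      MvPolynomial.C a4 * MvPolynomial.X 0 ^ 2 * MvPolynomial.X 1 * MvPolynomial.X 2 +
      MvPolynomial.C a5 * MvPolynomial.X 0 ^ 2 * MvPolynomial.X 2 ^ 2 +
      MvPolynomial.C a6 * MvPolynomial.X 0 * MvPolynomial.X 1 ^ 3 +
      MvPolynomial.C a7 * MvPolynomial.X 0 * MvPolynomial.X 1 ^ 2 * MvPolynomial.X 2 +
      MvPolynomial.C a8 * MvPolynomial.X 0 * MvPolynomial.X 1 * MvPolynomial.X 2 ^ 2 +
      MvPolynomial.C a9 * MvPolynomial.X 0 * MvPolynomial.X 2 ^ 3 +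
      MvPolynomial.C a10 * MvPolynomial.X 1 ^ 4 +
      MvPolynomial.C a11 * MvPolynomial.X 1 ^ 3 * MvPolynomial.X 2 +
      MvPolynomial.C a12 * MvPolynomial.X 1 ^ 2 * MvPolynomial.X 2 ^ 2 +
      MvPolynomial.C a13 * MvPolynomial.X 1 * MvPolynomial.X 2 ^ 3 +
      MvPolynomial.C a14 * MvPolynomial.X 2 ^ 4)
    (h6 : a6 = 0) (h11 : a11 ≠ 0)
    (g : PowerSeries K) (hg0 : PowerSeries.coeff 0 g = 0)
    (hg : MvPolynomial.aeval ![PowerSeries.X, 1, g] f = 0)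
    (β γ1 γ2 γ3 γ4 γ5 γ6 γ7 : K) (c : MvPolynomial (Fin 3) K)
    (hc : c = MvPolynomial.C γ1 * MvPolynomial.X 0 ^ 3 +
      MvPolynomial.C γ2 * MvPolynomial.X 2 ^ 3 +
      MvPolynomial.C β * MvPolynomial.X 0 ^ 2 * MvPolynomial.X 1 +
      MvPolynomial.C γ3 * MvPolynomial.X 0 ^ 2 * MvPolynomial.X 2 +
      MvPolynomial.C γ4 * MvPolynomial.X 0 * MvPolynomial.X 2 ^ 2 +
      MvPolynomial.C γ5 * MvPolynomial.X 0 * MvPolynomial.X 1 * MvPolynomial.X 2 +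
      MvPolynomial.C γ6 * MvPolynomial.X 1 ^ 2 * MvPolynomial.X 2 +
      MvPolynomial.C γ7 * MvPolynomial.X 1 * MvPolynomial.X 2 ^ 2) :
    PowerSeries.coeff 0 (MvPolynomial.aeval ![PowerSeries.X, 1, g] c) = 0 ∧
    PowerSeries.coeff 1 (MvPolynomial.aeval ![PowerSeries.X, 1, g] c) = 0 ∧
    PowerSeries.coeff 2 (MvPolynomial.aeval ![PowerSeries.X, 1, g] c) =
      β - γ6 * (a3 / a11) ∧
    ((∀ n < 3, PowerSeries.coeff n (MvPolynomial.aeval ![PowerSeries.X, 1, g] c) = 0) ↔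
      β = γ6 * a3 / a11) := by
  obtain rfl : f = quartic a0 a1 a2 a3 a4 a5 a6 a7 a8 a9 a10 a11 a12 a13 a14 := hf
  obtain rfl : c = cubic β γ1 γ2 γ3 γ4 γ5 γ6 γ7 := hc
  replace hg0 : PowerSeries.constantCoeff g = 0 := by simpa using hg0
  have hg1 := coeff_one_eq_zero_of_aeval_quartic_eq_zero h6 h11 hg0 hg
  have hg2 := coeff_two_eq_of_aeval_quartic_eq_zero h11 hg0 hg1 hg
  have hc0 := coeff_zero_aeval_cubic β γ1 γ2 γ3 γ4 γ5 γ6 γ7 hg0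
  have hc1 := coeff_one_aeval_cubic β γ1 γ2 γ3 γ4 γ5 γ6 γ7 hg0
  have hc2 := coeff_two_aeval_cubic β γ1 γ2 γ3 γ4 γ5 γ6 γ7 hg0 hg1
  rw [hg1, mul_zero] at hc1
  rw [hg2, mul_neg, ← sub_eq_add_neg] at hc2
  refine ⟨hc0, hc1, hc2, fun h ↦ ?_, fun hβ n hn ↦ ?_⟩
  · linear_combination hc2.symm.trans (h 2 (by norm_num))
  · interval_cases n
    · exact hc0
    · exact hc1
    · rw [hc2, hβ, mul_div_assoc, sub_self]

/-- Let `f` be the general homogeneous quartic over a field `K` with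
`a10 = 0`, `a6 = 0`, `a11 ≠ 0`, and let `g ∈ K⟦X⟧` with constant coefficient `0`
satisfy `f(X,1,g) = 0` (the local branch of the curve at `(0:1:0)`). Let
`c = γ1*x^3 + γ2*z^3 + β*x^2*y + γ3*x^2*z + γ4*x*z^2 + γ5*x*y*z + γ6*y^2*z + γ7*y*z^2`
be a cubic (coefficients of `y^3` and `x*y^2` vanish). Then `c(X,1,g)` has zero
coefficients in degrees `0` and `1`, its degree-`2` coefficient is
`β − γ6·(a3/a11)`, and all coefficients in degrees `< 3` vanish (i.e. `c(X,1,g)` has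
order at least `3`) if and only if `β = γ6·a3/a11`. -/
theorem statement2 (K : Type*) [Field K]
    (a0 a1 a2 a3 a4 a5 a6 a7 a8 a9 a10 a11 a12 a13 a14 : K)
    (f : MvPolynomial (Fin 3) K)
    (hf : f = MvPolynomial.C a0 * MvPolynomial.X 0 ^ 4 +
      MvPolynomial.C a1 * MvPolynomial.X 0 ^ 3 * MvPolynomial.X 1 +
      MvPolynomial.C a2 * MvPolynomial.X 0 ^ 3 * MvPolynomial.X 2 +
      MvPolynomial.C a3 * MvPolynomial.X 0 ^ 2 * MvPolynomial.X 1 ^ 2 +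
      MvPolynomial.C a4 * MvPolynomial.X 0 ^ 2 * MvPolynomial.X 1 * MvPolynomial.X 2 +
      MvPolynomial.C a5 * MvPolynomial.X 0 ^ 2 * MvPolynomial.X 2 ^ 2 +
      MvPolynomial.C a6 * MvPolynomial.X 0 * MvPolynomial.X 1 ^ 3 +
      MvPolynomial.C a7 * MvPolynomial.X 0 * MvPolynomial.X 1 ^ 2 * MvPolynomial.X 2 +
      MvPolynomial.C a8 * MvPolynomial.X 0 * MvPolynomial.X 1 * MvPolynomial.X 2 ^ 2 +
      MvPolynomial.C a9 * MvPolynomial.X 0 * MvPolynomial.X 2 ^ 3 +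
      MvPolynomial.C a10 * MvPolynomial.X 1 ^ 4 +
      MvPolynomial.C a11 * MvPolynomial.X 1 ^ 3 * MvPolynomial.X 2 +
      MvPolynomial.C a12 * MvPolynomial.X 1 ^ 2 * MvPolynomial.X 2 ^ 2 +
      MvPolynomial.C a13 * MvPolynomial.X 1 * MvPolynomial.X 2 ^ 3 +
      MvPolynomial.C a14 * MvPolynomial.X 2 ^ 4)
    (h10 : a10 = 0) (h6 : a6 = 0) (h11 : a11 ≠ 0)
    (g : PowerSeries K) (hg0 : PowerSeries.coeff 0 g = 0)
    (hg : MvPolynomial.aeval ![PowerSeries.X, 1, g] f = 0)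
    (β γ1 γ2 γ3 γ4 γ5 γ6 γ7 : K) (c : MvPolynomial (Fin 3) K)
    (hc : c = MvPolynomial.C γ1 * MvPolynomial.X 0 ^ 3 +
      MvPolynomial.C γ2 * MvPolynomial.X 2 ^ 3 +
      MvPolynomial.C β * MvPolynomial.X 0 ^ 2 * MvPolynomial.X 1 +
      MvPolynomial.C γ3 * MvPolynomial.X 0 ^ 2 * MvPolynomial.X 2 +
      MvPolynomial.C γ4 * MvPolynomial.X 0 * MvPolynomial.X 2 ^ 2 +
      MvPolynomial.C γ5 * MvPolynomial.X 0 * MvPolynomial.X 1 * MvPolynomial.X 2 +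
      MvPolynomial.C γ6 * MvPolynomial.X 1 ^ 2 * MvPolynomial.X 2 +
      MvPolynomial.C γ7 * MvPolynomial.X 1 * MvPolynomial.X 2 ^ 2) :
    PowerSeries.coeff 0 (MvPolynomial.aeval ![PowerSeries.X, 1, g] c) = 0 ∧
    PowerSeries.coeff 1 (MvPolynomial.aeval ![PowerSeries.X, 1, g] c) = 0 ∧
    PowerSeries.coeff 2 (MvPolynomial.aeval ![PowerSeries.X, 1, g] c) =
      β - γ6 * (a3 / a11) ∧
    ((∀ n < 3, PowerSeries.coeff n (MvPolynomial.aeval ![PowerSeries.X, 1, g] c) = 0) ↔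
      β = γ6 * a3 / a11) :=
  statement2_general K a0 a1 a2 a3 a4 a5 a6 a7 a8 a9 a10 a11 a12 a13 a14 f hf h6 h11 g hg0 hg β γ1
    γ2 γ3 γ4 γ5 γ6 γ7 c hc
end

section
/- Let K be a field of characteristic 0 and let u ∈ K satisfy u^8 − 8u^7 + 28u^6 − 56u^5 + 52u^4 + 16u^3 − 80u^2 + 64u − 44 = 0. Define s1 = −2u, s2 = (1/108)(−u^7 + 7u^6 − 21u^5 + 35u^4 − 26u^3 − 6u^2 − 34u + 46), s3 = (1/18)(u^7 − 7u^6 + 21u^5 − 35u^4 + 26u^3 + 6u^2 − 2u + 26), s4 = (1/9)(−u^7 + 7u^6 − 21u^5 + 35u^4 − 26u^3 − 6u^2 + 20u − 26), s5 = (1/27)(2u^7 − 14u^6 + 42u^5 − 70u^4 + 52u^3 + 12u^2 − 40u + 16). Consider the polynomials in y with coefficients in K[x]: F = −y^3 − 4y + x^4 and h = −y^2 + (u·x + s1)·y + s2·x^3 + s3·x^2 + s4·x + s5. Then there exist a nonzero constant c ∈ K and a monic polynomial g ∈ K[x] of degree 3 such that the resultant of F and h with respect to y equals c·g^3. -/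
open Polynomial

/-- The Sylvester matrix of `p` and `q`, regarded as polynomials of degree `m`
and `n` respectively: the first `n` rows contain the shifted coefficient vectors
of `p`, the last `m` rows those of `q`. -/
noncomputable def sylvesterMatrix {R : Type*} [CommRing R] (m n : ℕ) (p q : R[X]) :
    Matrix (Fin (n + m)) (Fin (n + m)) R :=
  Matrix.of fun i j =>
    if (i : ℕ) < n then
      (if (i : ℕ) ≤ (j : ℕ) ∧ (j : ℕ) ≤ (i : ℕ) + m then p.coeff (m + i - j) else 0)
    else
      (if (i : ℕ) - n ≤ (j : ℕ) ∧ (j : ℕ) ≤ (i : ℕ) then q.coeff ((i : ℕ) - j) else 0)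

/-- The resultant of `p` and `q`, regarded as polynomials of degree `m` and `n`:
the determinant of their Sylvester matrix. -/
noncomputable def resultant {R : Type*} [CommRing R] (m n : ℕ) (p q : R[X]) : R :=
  (sylvesterMatrix m n p q).det

/-!
At a point `x`, Sylvester's determinant of `F` and `h` is
`d^3 + 8 d^2 + 16 d + 4 b^2 d + 3 x^4 b d + x^4 b^3 + 4 x^4 b - x^8`, where `b = u x + s1` and
`d = s2 x^3 + s3 x^2 + s4 x + s5`. In `t = u - 1` the minimal polynomial of `u` reads
`t^8 - 18 t^4 - 27`; modulo it this value is identically `s2^3 g(x)^3` for the cubic `g` below,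
an ideal-membership statement settled by a Gröbner basis computation once denominators are
cleared. As `K` is infinite, agreement at every `x` is equality in `K[X]`.
-/

theorem sylvesterMatrix_three_two {R : Type*} [CommRing R] (p q : R[X]) :
    sylvesterMatrix 3 2 p q =
      !![p.coeff 3, p.coeff 2, p.coeff 1, p.coeff 0, 0;
        0, p.coeff 3, p.coeff 2, p.coeff 1, p.coeff 0;
        q.coeff 2, q.coeff 1, q.coeff 0, 0, 0;
        0, q.coeff 2, q.coeff 1, q.coeff 0, 0;
        0, 0, q.coeff 2, q.coeff 1, q.coeff 0] := by
  ext i j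
  fin_cases i <;> fin_cases j <;> rfl

theorem resultant_three_two {R : Type*} [CommRing R] (p q : R[X]) :
    resultant 3 2 p q =
      p.coeff 3 ^ 2 * q.coeff 0 ^ 3 - p.coeff 2 * p.coeff 3 * q.coeff 0 ^ 2 * q.coeff 1
        + p.coeff 2 ^ 2 * q.coeff 0 ^ 2 * q.coeff 2
        + p.coeff 1 * p.coeff 3 * q.coeff 0 * q.coeff 1 ^ 2
        - 2 * p.coeff 1 * p.coeff 3 * q.coeff 0 ^ 2 * q.coeff 2
        - p.coeff 1 * p.coeff 2 * q.coeff 0 * q.coeff 1 * q.coeff 2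
        + p.coeff 1 ^ 2 * q.coeff 0 * q.coeff 2 ^ 2
        - p.coeff 0 * p.coeff 3 * q.coeff 1 ^ 3
        + 3 * p.coeff 0 * p.coeff 3 * q.coeff 0 * q.coeff 1 * q.coeff 2
        + p.coeff 0 * p.coeff 2 * q.coeff 1 ^ 2 * q.coeff 2
        - 2 * p.coeff 0 * p.coeff 2 * q.coeff 0 * q.coeff 2 ^ 2
        - p.coeff 0 * p.coeff 1 * q.coeff 1 * q.coeff 2 ^ 2
        + p.coeff 0 ^ 2 * q.coeff 2 ^ 3 := by
  rw [_root_.resultant, sylvesterMatrix_three_two]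
  simp only [Matrix.det_succ_row_zero, Matrix.of_apply, Matrix.submatrix_apply, Fin.succAbove,
    Matrix.cons_val, Fin.reduceSucc, Matrix.det_unique, Fin.default_eq_zero, Fin.sum_univ_succ,
    Fin.coe_ofNat_eq_mod, ↓reduceIte, Fin.reduceCastSucc, Fin.reduceLT]
  ring

section

variable {K : Type*} [Field K]

/-- The monic cubic whose roots are the `x`-coordinates of the three contact points. -/
noncomputable def contactCubic (u : K) : K[X] :=
  X ^ 3
    + C (-7 / 3 + 7 / 3 * u - 5 / 3 * u ^ 2 - 1 / 3 * u ^ 3 + 7 / 6 * u ^ 4 - 5 / 6 * u ^ 5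
      + 1 / 6 * u ^ 6) * X ^ 2
    + C (8 / 9 - 4 * u + 4 * u ^ 2 - 4 / 9 * u ^ 3 - 2 * u ^ 4 + 2 * u ^ 5 - 4 / 9 * u ^ 6) * X
    + C (-4 / 9 - 4 / 3 * u - 4 / 3 * u ^ 2 + 20 / 9 * u ^ 3 - 2 / 3 * u ^ 4 - 2 / 3 * u ^ 5
      + 2 / 9 * u ^ 6)

theorem contactCubic_monic (u : K) : (contactCubic u).Monic := by
  unfold contactCubic
  monicity!

theorem natDegree_contactCubic (u : K) : (contactCubic u).natDegree = 3 := by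
  unfold contactCubic
  compute_degree!

set_option maxRecDepth 10000 in
theorem resultant_value_eq_cube [CharZero K] {u s1 s2 s3 s4 s5 : K}
    (hu : u ^ 8 - 8 * u ^ 7 + 28 * u ^ 6 - 56 * u ^ 5 + 52 * u ^ 4 + 16 * u ^ 3 -
      80 * u ^ 2 + 64 * u - 44 = 0)
    (hs1 : s1 = -2 * u)
    (hs2 : s2 = (1 / 108) * (-u ^ 7 + 7 * u ^ 6 - 21 * u ^ 5 + 35 * u ^ 4 - 26 * u ^ 3 -
      6 * u ^ 2 - 34 * u + 46))
    (hs3 : s3 = (1 / 18) * (u ^ 7 - 7 * u ^ 6 + 21 * u ^ 5 - 35 * u ^ 4 + 26 * u ^ 3 +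
      6 * u ^ 2 - 2 * u + 26))
    (hs4 : s4 = (1 / 9) * (-u ^ 7 + 7 * u ^ 6 - 21 * u ^ 5 + 35 * u ^ 4 - 26 * u ^ 3 -
      6 * u ^ 2 + 20 * u - 26))
    (hs5 : s5 = (1 / 27) * (2 * u ^ 7 - 14 * u ^ 6 + 42 * u ^ 5 - 70 * u ^ 4 +
      52 * u ^ 3 + 12 * u ^ 2 - 40 * u + 16))
    (x b d : K) (hb : b = u * x + s1) (hd : d = s2 * x ^ 3 + s3 * x ^ 2 + s4 * x + s5) :
    d ^ 3 + 8 * d ^ 2 + 16 * d + 4 * b ^ 2 * d + 3 * x ^ 4 * b * d + x ^ 4 * b ^ 3 + 4 * x ^ 4 * b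
      - x ^ 8 = s2 ^ 3 * (contactCubic u).eval x ^ 3 := by
  simp only [contactCubic, eval_add, eval_mul, eval_pow, eval_C, eval_X]
  subst hb hd hs1 hs2 hs3 hs4 hs5
  obtain ⟨t, rfl⟩ : ∃ t, u = t + 1 := ⟨u - 1, by ring⟩
  have ht : t ^ 8 - 18 * t ^ 4 - 27 = 0 := by linear_combination hu
  clear hu
  field_simp
  grind

end

/-- Let `K` be a field of characteristic 0 and `u ∈ K` with
`u^8 − 8u^7 + 28u^6 − 56u^5 + 52u^4 + 16u^3 − 80u^2 + 64u − 44 = 0`. With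
`s1, …, s5` as defined below, for `F = −y^3 − 4y + x^4` and
`h = −y^2 + (u·x + s1)·y + s2·x^3 + s3·x^2 + s4·x + s5`, regarded as polynomials
in `y` over `K[x]`, the resultant of `F` and `h` with respect to `y` is a nonzero
constant multiple of the cube of a monic cubic in `K[x]`. -/
theorem statement7 (K : Type*) [Field K] [CharZero K]
    (u : K)
    (hu : u ^ 8 - 8 * u ^ 7 + 28 * u ^ 6 - 56 * u ^ 5 + 52 * u ^ 4 + 16 * u ^ 3 -
      80 * u ^ 2 + 64 * u - 44 = 0)
    (s1 s2 s3 s4 s5 : K)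
    (hs1 : s1 = -2 * u)
    (hs2 : s2 = (1 / 108) * (-u ^ 7 + 7 * u ^ 6 - 21 * u ^ 5 + 35 * u ^ 4 - 26 * u ^ 3 -
      6 * u ^ 2 - 34 * u + 46))
    (hs3 : s3 = (1 / 18) * (u ^ 7 - 7 * u ^ 6 + 21 * u ^ 5 - 35 * u ^ 4 + 26 * u ^ 3 +
      6 * u ^ 2 - 2 * u + 26))
    (hs4 : s4 = (1 / 9) * (-u ^ 7 + 7 * u ^ 6 - 21 * u ^ 5 + 35 * u ^ 4 - 26 * u ^ 3 -
      6 * u ^ 2 + 20 * u - 26))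
    (hs5 : s5 = (1 / 27) * (2 * u ^ 7 - 14 * u ^ 6 + 42 * u ^ 5 - 70 * u ^ 4 +
      52 * u ^ 3 + 12 * u ^ 2 - 40 * u + 16))
    (F h : Polynomial (Polynomial K))
    (hF : F = -(X ^ 3) - C (C 4) * X + C (X ^ 4))
    (hh : h = -(X ^ 2) + C (C u * X + C s1) * X +
      C (C s2 * X ^ 3 + C s3 * X ^ 2 + C s4 * X + C s5)) :
    ∃ c : K, c ≠ 0 ∧ ∃ g : Polynomial K, g.Monic ∧ g.natDegree = 3 ∧
      resultant 3 2 F h = C c * g ^ 3 := by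
  -- `s2` and the minimal polynomial of `u` have no common root.
  have hs2_ne : s2 ≠ 0 := by
    subst hs2
    grind
  obtain ⟨hF0, hF1, hF2, hF3⟩ :
      F.coeff 0 = X ^ 4 ∧ F.coeff 1 = -C 4 ∧ F.coeff 2 = 0 ∧ F.coeff 3 = -1 := by
    subst hF
    simp [coeff_X, coeff_C, -map_pow]
  obtain ⟨hh0, hh1, hh2⟩ : h.coeff 0 = C s2 * X ^ 3 + C s3 * X ^ 2 + C s4 * X + C s5 ∧
      h.coeff 1 = C u * X + C s1 ∧ h.coeff 2 = -1 := by
    subst hh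
    simp [coeff_X, coeff_C, -map_pow]
  refine ⟨s2 ^ 3, pow_ne_zero 3 hs2_ne, contactCubic u, contactCubic_monic u,
    natDegree_contactCubic u, Polynomial.funext fun x => ?_⟩
  rw [eval_mul, eval_C, eval_pow, ← resultant_value_eq_cube hu hs1 hs2 hs3 hs4 hs5 x _ _ rfl rfl,
    resultant_three_two, hF0, hF1, hF2, hF3, hh0, hh1, hh2]
  simp only [eval_add, eval_sub, eval_mul, eval_pow, eval_neg, eval_C, eval_X, eval_one,
    eval_ofNat, eval_zero]
  ring
end
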